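/- arXiv:2212.07390 — 3 statements merged into one kernel-verified Lean document; each statement's English description precedes it below -/
import Mathlib

section
/- If F : C → D is an additive exact faithful functor between abelian categories admitting a left adjoint G, then the adjunction (G, F) is monadic, i.e., the comparison functor C → D^T for the monad T = F ∘ G is an equivalence of categories. -/
/-!
Crude monadicity. An algebra `(X, a)` is the coequalizer of the split (Beck) pair
`F G a, F ε_{G X}`, so if `F` preserves the coequalizer `M` of `G a, ε_{G X}` in `C`, then
`F M ≅ X` as algebras. If moreover `F` reflects isomorphisms, it reflects these coequalizers, so
every counit `ε_M` is the coequalizer of `G F ε_M, ε_{G F M}`; this makes the comparison functor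
fully faithful. In the abelian situation, `C` has coequalizers, the right exact `F` preserves
them, and the faithful `F` reflects monomorphisms and epimorphisms, hence isomorphisms since `C`
is balanced.
-/

open CategoryTheory Limits

namespace CategoryTheory.Monad

variable {C D : Type*} [Category C] [Category D] {F : C ⥤ D} {G : D ⥤ C} (adj : G ⊣ F)

lemma isSplitEpi_map_counit_app (M : C) : IsSplitEpi (F.map (adj.counit.app M)) :=
  ⟨⟨adj.unit.app (F.obj M), adj.right_triangle_components M⟩⟩

lemma map_map_hom_comp_eq_map_counit_comp {X : D} {a : F.obj (G.obj X) ⟶ X}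
    (ha : adj.unit.app X ≫ a = 𝟙 X) {M : C} (π : G.obj X ⟶ M)
    (hπ : G.map a ≫ π = adj.counit.app (G.obj X) ≫ π) (e : F.obj M ≅ X)
    (he : F.map π ≫ e.hom = a) :
    F.map (G.map e.hom) ≫ a = F.map (adj.counit.app M) ≫ e.hom := by
  have : IsSplitEpi (F.map π) := ⟨⟨e.hom ≫ adj.unit.app X, by
    rw [← cancel_mono e.hom, Category.assoc, Category.assoc, he, ha, Category.comp_id,
      Category.id_comp]⟩⟩
  rw [← cancel_epi (F.map (G.map (F.map π)))]
  calc _ = F.map (G.map a) ≫ a := by rw [← F.map_comp_assoc, ← G.map_comp, he]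
    _ = F.map (G.map (F.map π) ≫ adj.counit.app M) ≫ e.hom := by
      rw [adj.counit_naturality π, ← hπ, F.map_comp_assoc, he]
    _ = _ := F.map_comp_assoc _ _ _

variable [HasCoequalizers C] [PreservesColimitsOfShape WalkingParallelPair F]

noncomputable def comparisonObjCoequalizerIso (A : adj.toMonad.Algebra) :
    (comparison adj).obj (coequalizer (G.map A.a) (adj.counit.app (G.obj A.A))) ≅ A :=
  let hF := isColimitOfHasCoequalizerOfPreservesColimit F (G.map A.a) (adj.counit.app (G.obj A.A))
  let e := hF.coconePointUniqueUpToIso (beckCoequalizer A)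
  Algebra.isoMk e (map_map_hom_comp_eq_map_counit_comp adj A.unit _ (coequalizer.condition _ _) e
    (hF.comp_coconePointUniqueUpToIso_hom (beckCoequalizer A) WalkingParallelPair.one))

instance : (comparison adj).EssSurj where
  mem_essImage A := ⟨_, ⟨comparisonObjCoequalizerIso adj A⟩⟩

variable [F.ReflectsIsomorphisms]

/-- `F` sends this cofork to the Beck cofork of the algebra `(F M, F ε_M)`, a split coequalizer. -/
noncomputable def isColimitCounitCofork (M : C) :
    IsColimit (Cofork.ofπ (adj.counit.app M) (adj.counit_naturality _)) :=
  have := reflectsColimit_of_reflectsIsomorphisms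
    (parallelPair (G.map (F.map (adj.counit.app M))) (adj.counit.app ((F ⋙ G).obj M))) F
  isColimitOfIsColimitCoforkMap F _ (beckCoequalizer ((comparison adj).obj M))

lemma exists_map_eq_of_map_comp_counit {M N : C} (f : F.obj M ⟶ F.obj N)
    (hf : F.map (G.map f) ≫ F.map (adj.counit.app N) = F.map (adj.counit.app M) ≫ f) :
    ∃ g : M ⟶ N, F.map g = f := by
  have hcoeq : G.map (F.map (adj.counit.app M)) ≫ G.map f ≫ adj.counit.app N =
      adj.counit.app (G.obj (F.obj M)) ≫ G.map f ≫ adj.counit.app N :=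
    calc _ = G.map (F.map (G.map f ≫ adj.counit.app N)) ≫ adj.counit.app N := by
          rw [F.map_comp, hf, G.map_comp_assoc]
      _ = _ := adj.counit_naturality _
  obtain ⟨g, hg⟩ := Cofork.IsColimit.desc' (isColimitCounitCofork adj M) _ hcoeq
  refine ⟨g, ?_⟩
  have := isSplitEpi_map_counit_app adj M
  rw [Cofork.π_ofπ] at hg
  rw [← cancel_epi (F.map (adj.counit.app M)), ← F.map_comp, hg, F.map_comp, hf]

instance : (comparison adj).Full where
  map_surjective h := by
    obtain ⟨g, hg⟩ := exists_map_eq_of_map_comp_counit adj h.f h.h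
    exact ⟨g, Algebra.Hom.ext hg⟩

instance : (comparison adj).Faithful where
  map_injective {M N} g g' h := by
    apply Cofork.IsColimit.hom_ext (isColimitCounitCofork adj M)
    have hF : F.map g = F.map g' := congrArg Algebra.Hom.f h
    exact (adj.counit_naturality g).symm.trans
      ((congrArg (fun f ↦ G.map f ≫ adj.counit.app N) hF).trans (adj.counit_naturality g'))

theorem isEquivalence_comparison_of_reflectsIsomorphisms : (comparison adj).IsEquivalence where

end CategoryTheory.Monad

open CategoryTheory

theorem exact_faithful_is_monadic_general {C D : Type*} [Category C] [Category D]
    [Abelian C]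
    (F : C ⥤ D)
    [Limits.PreservesFiniteColimits F] [F.Faithful]
    (G : D ⥤ C) (adj : G ⊣ F) :
    (Monad.comparison adj).IsEquivalence := by
  have : F.ReflectsIsomorphisms :=
    reflectsIsomorphisms_of_reflectsMonomorphisms_of_reflectsEpimorphisms F
  exact Monad.isEquivalence_comparison_of_reflectsIsomorphisms adj

/-- If `F : C ⥤ D` is an additive exact faithful functor between abelian
categories admitting a left adjoint `G`, then the adjunction `(G, F)` is monadic: the
comparison functor `C ⥤ D^T` for the monad `T = F ∘ G` is an equivalence of categories. -/
theorem exact_faithful_is_monadic {C D : Type*} [Category C] [Category D]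
    [Abelian C] [Abelian D]
    (F : C ⥤ D) [F.Additive] [Limits.PreservesFiniteLimits F]
    [Limits.PreservesFiniteColimits F] [F.Faithful]
    (G : D ⥤ C) (adj : G ⊣ F) :
    (Monad.comparison adj).IsEquivalence :=
  exact_faithful_is_monadic_general F G adj
end

section
/- Let D ⊆ C be a monoidal subcategory and M a left C-module category, with S : M^op × M → A equipped with a C-prebalancing β. If both relative ends ∮_{M ∈ M}(S, β) over the C-action and ∮_{M ∈ Res^C_D M}(S, β) over the restricted D-action exist, with dinatural transformations π and λ respectively, then there is a monomorphism ι : ∮_{M ∈ M}(S,β) → ∮_{M ∈ Res^C_D M}(S,β) with λ_M ∘ ι = π_M for all M. -/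
open CategoryTheory MonoidalCategory Opposite

/-- A left module category over a monoidal category `C`. -/
structure ModCat (C : Type*) [Category C] [MonoidalCategory C]
    (M : Type*) [Category M] where
  act : C ⥤ M ⥤ M
  assoc : ∀ (X Y : C) (A : M),
    (act.obj (X ⊗ Y)).obj A ≅ (act.obj X).obj ((act.obj Y).obj A)
  unitor : ∀ A : M, (act.obj (𝟙_ C)).obj A ≅ A
  assoc_naturality : ∀ (X Y : C) {A B : M} (f : A ⟶ B),
    (act.obj (X ⊗ Y)).map f ≫ (assoc X Y B).hom =
      (assoc X Y A).hom ≫ (act.obj X).map ((act.obj Y).map f)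
  unitor_naturality : ∀ {A B : M} (f : A ⟶ B),
    (act.obj (𝟙_ C)).map f ≫ (unitor B).hom = (unitor A).hom ≫ f
  pentagon : ∀ (X Y Z : C) (A : M),
    (assoc (X ⊗ Y) Z A).hom ≫ (assoc X Y ((act.obj Z).obj A)).hom =
      (act.map (α_ X Y Z).hom).app A ≫ (assoc X (Y ⊗ Z) A).hom ≫
        (act.obj X).map (assoc Y Z A).hom
  triangle : ∀ (X : C) (A : M),
    (assoc X (𝟙_ C) A).hom ≫ (act.obj X).map (unitor A).hom =
      (act.map (ρ_ X).hom).app A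

variable {C : Type*} [Category C] [MonoidalCategory C] [RightRigidCategory C]
variable {M A' : Type*} [Category M] [Category A']

/-- A `C`-prebalancing of a functor `S : Mᵒᵖ × M ⥤ A'`: natural isomorphisms
`β^X_{A,B} : S(A, X ▷ B) ≅ S(Xᘁ ▷ A, B)`. -/
structure Prebal (ρ : ModCat C M) (S : Mᵒᵖ ⥤ M ⥤ A') where
  β : ∀ (X : C) (A B : M),
    (S.obj (op A)).obj ((ρ.act.obj X).obj B) ≅
      (S.obj (op ((ρ.act.obj Xᘁ).obj A))).obj B
  nat_right : ∀ (X : C) (A : M) {B B' : M} (g : B ⟶ B'),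
    (S.obj (op A)).map ((ρ.act.obj X).map g) ≫ (β X A B').hom =
      (β X A B).hom ≫ (S.obj (op ((ρ.act.obj Xᘁ).obj A))).map g
  nat_left : ∀ (X : C) {A A'' : M} (f : A ⟶ A'') (B : M),
    (S.map f.op).app ((ρ.act.obj X).obj B) ≫ (β X A B).hom =
      (β X A'' B).hom ≫ (S.map ((ρ.act.obj Xᘁ).map f).op).app B

/-- Dinaturality of a family `p_A : E ⟶ S(A,A)`. -/
def Dinat (S : Mᵒᵖ ⥤ M ⥤ A') {E : A'}
    (p : ∀ A : M, E ⟶ (S.obj (op A)).obj A) : Prop :=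
  ∀ {A B : M} (f : A ⟶ B),
    p A ≫ (S.obj (op A)).map f = p B ≫ (S.map f.op).app B

/-- The balancing condition (relative-end condition) for a dinatural family:
`S(ev_X ▷ id_A, id) ∘ π_A = S(m_{Xᘁ,X,A}, id) ∘ β^X_{X▷A,A} ∘ π_{X▷A}`. -/
def BalCond (ρ : ModCat C M) (S : Mᵒᵖ ⥤ M ⥤ A') (pb : Prebal ρ S) {E : A'}
    (p : ∀ A : M, E ⟶ (S.obj (op A)).obj A) : Prop :=
  ∀ (X : C) (A : M),
    p A ≫ (S.map ((ρ.act.map (ε_ X Xᘁ)).app A ≫ (ρ.unitor A).hom).op).app A =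
      p ((ρ.act.obj X).obj A) ≫ (pb.β X ((ρ.act.obj X).obj A) A).hom ≫
        (S.map ((ρ.assoc Xᘁ X A).hom).op).app A

/-- `(E, p)` is the relative end `∮_{A ∈ M} (S, β)`. -/
structure IsRelEnd (ρ : ModCat C M) (S : Mᵒᵖ ⥤ M ⥤ A') (pb : Prebal ρ S) (E : A')
    (p : ∀ A : M, E ⟶ (S.obj (op A)).obj A) : Prop where
  dinat : Dinat S p
  bal : BalCond ρ S pb p
  univ : ∀ {E' : A'} (p' : ∀ A : M, E' ⟶ (S.obj (op A)).obj A),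
    Dinat S p' → BalCond ρ S pb p' → ∃! h : E' ⟶ E, ∀ A, p' A = h ≫ p A


/-- The balancing condition restricted to the objects of a tensor subcategory
`ι : D ⥤ C`. -/
def BalCondRes {D : Type*} [Category D] [MonoidalCategory D] (ι : D ⥤ C)
    (ρ : ModCat C M) (S : Mᵒᵖ ⥤ M ⥤ A') (pb : Prebal ρ S) {E : A'}
    (p : ∀ A : M, E ⟶ (S.obj (op A)).obj A) : Prop :=
  ∀ (Y : D) (A : M),
    p A ≫ (S.map ((ρ.act.map (ε_ (ι.obj Y) (ι.obj Y)ᘁ)).app A ≫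
        (ρ.unitor A).hom).op).app A =
      p ((ρ.act.obj (ι.obj Y)).obj A) ≫
        (pb.β (ι.obj Y) ((ρ.act.obj (ι.obj Y)).obj A) A).hom ≫
        (S.map ((ρ.assoc (ι.obj Y)ᘁ (ι.obj Y) A).hom).op).app A

/-- `(E, p)` is the relative end of `(S, β)` over the restricted `D`-module structure. -/
structure IsRelEndRes {D : Type*} [Category D] [MonoidalCategory D] (ι : D ⥤ C)
    (ρ : ModCat C M) (S : Mᵒᵖ ⥤ M ⥤ A') (pb : Prebal ρ S) (E : A')
    (p : ∀ A : M, E ⟶ (S.obj (op A)).obj A) : Prop where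
  dinat : Dinat S p
  bal : BalCondRes ι ρ S pb p
  univ : ∀ {E' : A'} (p' : ∀ A : M, E' ⟶ (S.obj (op A)).obj A),
    Dinat S p' → BalCondRes ι ρ S pb p' → ∃! h : E' ⟶ E, ∀ A, p' A = h ≫ p A

/-- Let `D ⊆ C` be a tensor subcategory (a fully faithful strong monoidal
inclusion, closed under duals) and `M` a left `C`-module category, with `(S, β)` as above.
If both the relative end over the `C`-action and the relative end over the restricted
`D`-action exist, then there is a monomorphism
`ι' : ∮_{A ∈ M}(S,β) ⟶ ∮_{A ∈ Res_D M}(S,β)` with `λ_A ∘ ι' = π_A` for all `A`. -/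
theorem relEnd_restriction_mono
    {D : Type*} [Category D] [MonoidalCategory D]
    (ι : D ⥤ C) [ι.Monoidal] [ι.Faithful] [ι.Full]
    (hdual : ∀ Y : D, ∃ Y' : D, Nonempty (ι.obj Y' ≅ (ι.obj Y)ᘁ))
    (ρ : ModCat C M) (S : Mᵒᵖ ⥤ M ⥤ A') (pb : Prebal ρ S)
    {E : A'} (p : ∀ A : M, E ⟶ (S.obj (op A)).obj A) (hE : IsRelEnd ρ S pb E p)
    {ED : A'} (lam : ∀ A : M, ED ⟶ (S.obj (op A)).obj A)
    (hED : IsRelEndRes ι ρ S pb ED lam) :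
    ∃ i : E ⟶ ED, Mono i ∧ ∀ A : M, i ≫ lam A = p A := by
  have hres : BalCondRes ι ρ S pb p := fun Y A => hE.bal (ι.obj Y) A
  obtain ⟨i, hi, _⟩ := hED.univ p hE.dinat hres
  refine ⟨i, ⟨fun {Z} a b hab => ?_⟩, fun A => (hi A).symm⟩
  have hp : ∀ A, a ≫ p A = b ≫ p A := by
    intro A
    rw [hi A, ← Category.assoc, ← Category.assoc, hab]
  have hdin : Dinat S (fun A => a ≫ p A) := by
    intro A B f
    simp only [Category.assoc, hE.dinat f]
  have hbal : BalCond ρ S pb (fun A => a ≫ p A) := by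
    intro X A
    simp only [Category.assoc, hE.bal X A]
  obtain ⟨h, _, huniq⟩ := hE.univ (fun A => a ≫ p A) hdin hbal
  have ha := huniq a (fun A => rfl)
  have hb := huniq b (fun A => hp A)
  rw [ha, hb]
end

section
/- Let G be a finite group acting on a monoidal category C by monoidal autoequivalences (F_g, ξ^g). Then the crossed product category C ⋊ G = ⊕_{g ∈ G} C_g with tensor product [X, g] ⊗ [Y, h] = [X ⊗ F_g(Y), gh] acts on C by [X, g] ▷ Y = X ⊗ F_g(Y), and this defines a left (C ⋊ G)-module category structure on C: there exist associativity isomorphisms ([X,g] ⊗ [Y,h]) ▷ Z → [X,g] ▷ ([Y,h] ▷ Z) built from ξ^g and the associator of C, satisfying the module category pentagon axiom. -/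
/-!
Write `crossedAssoc` as the associator of `C` followed by `X ◁ ξ̃`, where
`ξ̃ = (F_g Y ◁ μ₂⁻¹) ≫ ξ^g : F_g Y ⊗ F_{gh} A ⟶ F_g (Y ⊗ F_h A)` (`crossedAssocCore`).
The pentagon of `C` reduces the claim to a pentagon for `ξ̃` alone. For that one, the
monoidality of `μ₂` trades `ξ^{gh}` for `ξ^g ≫ F_g ξ^h`, the cocycle condition trades
`μ₂_{gh,l}⁻¹ ≫ μ₂_{g,h}⁻¹` for `μ₂_{g,hl}⁻¹ ≫ F_g μ₂_{h,l}⁻¹`, and what remains is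
naturality of `ξ^g` and of the associator together with the associativity axiom of `ξ^g`.
-/

open CategoryTheory MonoidalCategory Functor.LaxMonoidal

variable {C : Type*} [Category C] [MonoidalCategory C]
variable {G : Type*} [Group G]

/-- The module associativity constraint of the action of the crossed product `C ⋊ G` on `C`,
`([X,g] ⊗ [Y,h]) ▷ A = (X ⊗ F_g(Y)) ⊗ F_{gh}(A) ≅ X ⊗ F_g(Y ⊗ F_h(A)) = [X,g] ▷ ([Y,h] ▷ A)`,
built from the associator of `C`, the monoidal structure `ξ^g` of `F_g` and the
composition isomorphism `μ₂_{g,h} : F_g ∘ F_h ≅ F_{gh}` of the `G`-action. -/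
noncomputable def crossedAssoc (F : G → C ⥤ C) [∀ g, (F g).Monoidal]
    (μ₂ : ∀ (g h : G) (Z : C), (F g).obj ((F h).obj Z) ≅ (F (g * h)).obj Z)
    (X : C) (g : G) (Y : C) (h : G) (A : C) :
    (X ⊗ (F g).obj Y) ⊗ (F (g * h)).obj A ≅ X ⊗ (F g).obj (Y ⊗ (F h).obj A) :=
  α_ X ((F g).obj Y) ((F (g * h)).obj A) ≪≫
    whiskerLeftIso X
      ((whiskerLeftIso ((F g).obj Y) (μ₂ g h A).symm) ≪≫
        asIso (μ (F g) Y ((F h).obj A)))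

lemma μ₂_cocycle_inv {D : Type*} [Category D] (F : G → D ⥤ D)
    (μ₂ : ∀ (g h : G) (Z : D), (F g).obj ((F h).obj Z) ≅ (F (g * h)).obj Z) {g h l : G} {A : D}
    (hcocycle : (F g).map (μ₂ h l A).hom ≫ (μ₂ g (h * l) A).hom =
      (μ₂ g h ((F l).obj A)).hom ≫ (μ₂ (g * h) l A).hom ≫ eqToHom (by rw [mul_assoc])) :
    (μ₂ (g * h) l A).inv ≫ (μ₂ g h ((F l).obj A)).inv =
      (eqToHom (by rw [mul_assoc]) ≫ (μ₂ g (h * l) A).inv) ≫ (F g).map (μ₂ h l A).inv := by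
  have hinv := IsIso.inv_eq_inv.2 hcocycle
  simp only [IsIso.inv_comp, IsIso.Iso.inv_hom, ← Functor.map_inv, inv_eqToHom] at hinv
  simp [hinv]

section

variable (F : G → C ⥤ C) [∀ g, (F g).Monoidal]
  (μ₂ : ∀ (g h : G) (Z : C), (F g).obj ((F h).obj Z) ≅ (F (g * h)).obj Z)

noncomputable def crossedAssocCore (g : G) (Y : C) (h : G) (A : C) :
    (F g).obj Y ⊗ (F (g * h)).obj A ≅ (F g).obj (Y ⊗ (F h).obj A) :=
  whiskerLeftIso ((F g).obj Y) (μ₂ g h A).symm ≪≫ asIso (μ (F g) Y ((F h).obj A))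

lemma crossedAssocCore_hom (g : G) (Y : C) (h : G) (A : C) :
    (crossedAssocCore F μ₂ g Y h A).hom = (F g).obj Y ◁ (μ₂ g h A).inv ≫ μ (F g) Y ((F h).obj A) :=
  rfl

lemma crossedAssoc_eq (X : C) (g : G) (Y : C) (h : G) (A : C) :
    crossedAssoc F μ₂ X g Y h A =
      α_ X ((F g).obj Y) ((F (g * h)).obj A) ≪≫ whiskerLeftIso X (crossedAssocCore F μ₂ g Y h A) :=
  rfl

lemma μ₂_monoidal_inv {g h : G} {Y Z : C}
    (hμmon : μ (F g) ((F h).obj Y) ((F h).obj Z) ≫ (F g).map (μ (F h) Y Z) ≫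
        (μ₂ g h (Y ⊗ Z)).hom = ((μ₂ g h Y).hom ⊗ₘ (μ₂ g h Z).hom) ≫ μ (F (g * h)) Y Z) :
    μ (F (g * h)) Y Z ≫ (μ₂ g h (Y ⊗ Z)).inv =
      ((μ₂ g h Y).inv ⊗ₘ (μ₂ g h Z).inv) ≫ μ (F g) _ _ ≫ (F g).map (μ (F h) Y Z) := by
  rw [Iso.comp_inv_eq, Category.assoc, Category.assoc, hμmon, tensorHom_comp_tensorHom_assoc]
  simp

theorem crossedAssocCore_pentagon
    (hμmon : ∀ (g h : G) (Y Z : C),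
      μ (F g) ((F h).obj Y) ((F h).obj Z) ≫ (F g).map (μ (F h) Y Z) ≫
          (μ₂ g h (Y ⊗ Z)).hom =
        ((μ₂ g h Y).hom ⊗ₘ (μ₂ g h Z).hom) ≫ μ (F (g * h)) Y Z)
    (hcocycle : ∀ (g h l : G) (Z : C),
      (F g).map (μ₂ h l Z).hom ≫ (μ₂ g (h * l) Z).hom =
        (μ₂ g h ((F l).obj Z)).hom ≫ (μ₂ (g * h) l Z).hom ≫
          eqToHom (by rw [mul_assoc]))
    (Y Z A : C) (g h l : G) :
    (α_ ((F g).obj Y) ((F (g * h)).obj Z) ((F (g * h * l)).obj A)).hom ≫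
        (F g).obj Y ◁ (crossedAssocCore F μ₂ (g * h) Z l A).hom ≫
        (crossedAssocCore F μ₂ g Y h (Z ⊗ (F l).obj A)).hom =
      ((crossedAssocCore F μ₂ g Y h Z).hom ⊗ₘ
          (eqToHom (by rw [mul_assoc]) : (F (g * h * l)).obj A ⟶ (F (g * (h * l))).obj A)) ≫
        (crossedAssocCore F μ₂ g (Y ⊗ (F h).obj Z) (h * l) A).hom ≫
        (F g).map ((α_ Y ((F h).obj Z) ((F (h * l)).obj A)).hom ≫
          Y ◁ (crossedAssocCore F μ₂ h Z l A).hom) := by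
  calc _ = (α_ _ _ _).hom ≫ (F g).obj Y ◁ (((μ₂ g h Z).inv ⊗ₘ
          ((eqToHom (by rw [mul_assoc]) ≫ (μ₂ g (h * l) A).inv) ≫ (F g).map (μ₂ h l A).inv)) ≫
          μ (F g) _ _ ≫ (F g).map (μ (F h) Z ((F l).obj A))) ≫
          μ (F g) Y ((F h).obj (Z ⊗ (F l).obj A)) := by
        rw [crossedAssocCore_hom, crossedAssocCore_hom, ← whiskerLeft_comp_assoc, Category.assoc,
          μ₂_monoidal_inv F μ₂ (hμmon g h Z _), whiskerLeft_comp_tensorHom_assoc,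
          μ₂_cocycle_inv F μ₂ (hcocycle g h l A)]
    _ = (α_ _ _ _).hom ≫ (F g).obj Y ◁ (((μ₂ g h Z).inv ⊗ₘ
          (eqToHom (by rw [mul_assoc]) ≫ (μ₂ g (h * l) A).inv)) ≫ μ (F g) _ _) ≫
          μ (F g) Y _ ≫ (F g).map (Y ◁ (crossedAssocCore F μ₂ h Z l A).hom) := by
        rw [← tensorHom_comp_whiskerLeft, Category.assoc, μ_natural_right_assoc, ← Functor.map_comp,
          ← Category.assoc (_ ⊗ₘ _), whiskerLeft_comp_assoc, μ_natural_right, crossedAssocCore_hom]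
    _ = (((F g).obj Y ◁ (μ₂ g h Z).inv) ⊗ₘ (eqToHom (by rw [mul_assoc]) ≫ (μ₂ g (h * l) A).inv)) ≫
          (α_ _ _ _).hom ≫ (F g).obj Y ◁ μ (F g) _ _ ≫
          μ (F g) Y _ ≫ (F g).map (Y ◁ (crossedAssocCore F μ₂ h Z l A).hom) := by
        rw [whiskerLeft_comp_assoc, ← id_tensorHom ((F g).obj Y) (_ ⊗ₘ _),
          ← associator_naturality_assoc, id_tensorHom]
    _ = (((F g).obj Y ◁ (μ₂ g h Z).inv) ⊗ₘ (eqToHom (by rw [mul_assoc]) ≫ (μ₂ g (h * l) A).inv)) ≫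
          μ (F g) Y ((F h).obj Z) ▷ _ ≫ μ (F g) _ _ ≫ (F g).map ((α_ _ _ _).hom ≫
            Y ◁ (crossedAssocCore F μ₂ h Z l A).hom) := by
        rw [Functor.map_comp, associativity_assoc]
    _ = _ := by
        rw [crossedAssocCore_hom F μ₂ g Y, crossedAssocCore_hom F μ₂ g (Y ⊗ _),
          ← tensorHom_comp_whiskerRight_assoc, Category.assoc, ← whisker_exchange_assoc,
          tensorHom_comp_whiskerLeft_assoc]

end

/-- Let `G` be a finite group acting on a monoidal category `C` by monoidal
autoequivalences `(F_g, ξ^g)` (with composition isomorphisms `μ₂_{g,h} : F_g ∘ F_h ≅ F_{gh}`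
that are natural, monoidal, and satisfy the cocycle coherence).  Then the crossed product
`C ⋊ G` (objects `[X, g]`, tensor `[X,g] ⊗ [Y,h] = [X ⊗ F_g(Y), gh]`) acts on `C` by
`[X,g] ▷ A = X ⊗ F_g(A)`, and this is a left module category structure: the associativity
isomorphisms `crossedAssoc`, built from `ξ^g` and the associator of `C`, satisfy the module
category pentagon axiom (the associator of `C ⋊ G` has as its `C`-component the same
composite, together with the identification `F_{(gh)l} = F_{g(hl)}`). -/
theorem crossed_product_module_pentagon
    (F : G → C ⥤ C) [∀ g, (F g).Monoidal]
    (μ₂ : ∀ (g h : G) (Z : C), (F g).obj ((F h).obj Z) ≅ (F (g * h)).obj Z)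
    (hμmon : ∀ (g h : G) (Y Z : C),
      μ (F g) ((F h).obj Y) ((F h).obj Z) ≫ (F g).map (μ (F h) Y Z) ≫
          (μ₂ g h (Y ⊗ Z)).hom =
        ((μ₂ g h Y).hom ⊗ₘ (μ₂ g h Z).hom) ≫ μ (F (g * h)) Y Z)
    (hcocycle : ∀ (g h l : G) (Z : C),
      (F g).map (μ₂ h l Z).hom ≫ (μ₂ g (h * l) Z).hom =
        (μ₂ g h ((F l).obj Z)).hom ≫ (μ₂ (g * h) l Z).hom ≫
          eqToHom (by rw [mul_assoc]))
    (X Y Z A : C) (g h l : G) :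
    (crossedAssoc F μ₂ (X ⊗ (F g).obj Y) (g * h) Z l A).hom ≫
        (crossedAssoc F μ₂ X g Y h (Z ⊗ (F l).obj A)).hom =
      ((crossedAssoc F μ₂ X g Y h Z).hom ⊗ₘ
          (eqToHom (by rw [mul_assoc]) : (F (g * h * l)).obj A ⟶ (F (g * (h * l))).obj A)) ≫
        (crossedAssoc F μ₂ X g (Y ⊗ (F h).obj Z) (h * l) A).hom ≫
        (X ◁ (F g).map (crossedAssoc F μ₂ Y h Z l A).hom) := by
  simp only [crossedAssoc_eq, Iso.trans_hom, whiskerLeftIso_hom, Category.assoc]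
  calc _ = (α_ X _ _).hom ▷ _ ≫ (α_ X _ _).hom ≫ X ◁ ((α_ _ _ _).hom ≫
          (F g).obj Y ◁ (crossedAssocCore F μ₂ (g * h) Z l A).hom ≫
          (crossedAssocCore F μ₂ g Y h (Z ⊗ (F l).obj A)).hom) := by
        rw [associator_naturality_right_assoc, ← pentagon_assoc, whiskerLeft_comp, whiskerLeft_comp]
    _ = (α_ X _ _).hom ▷ _ ≫ (α_ X _ _).hom ≫ X ◁ (((crossedAssocCore F μ₂ g Y h Z).hom ⊗ₘ
          (eqToHom (by rw [mul_assoc]) : (F (g * h * l)).obj A ⟶ (F (g * (h * l))).obj A)) ≫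
          (crossedAssocCore F μ₂ g (Y ⊗ (F h).obj Z) (h * l) A).hom ≫
          (F g).map ((α_ Y ((F h).obj Z) ((F (h * l)).obj A)).hom ≫
            Y ◁ (crossedAssocCore F μ₂ h Z l A).hom)) := by
        rw [crossedAssocCore_pentagon F μ₂ hμmon hcocycle]
    _ = _ := by
        rw [← whiskerRight_comp_tensorHom_assoc,
          ← id_tensorHom X (crossedAssocCore F μ₂ g Y h Z).hom, associator_naturality_assoc,
          id_tensorHom, whiskerLeft_comp, whiskerLeft_comp]
end
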